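/- Let (x1, x2, z1) be a point satisfying the first-order conditions (1 − σ)·(p(x1 + x2) + x1·p′(x1 + x2)) = C′(x1) and q·F′(x1·p(x1 + x2) − z1) = (1 − q)·σ, with C′(x1) > 0 and p(x1 + x2) > 0. If F″(x1·p(x1 + x2) − z1) > 0, C″(x1) ≥ 0, p′(x1 + x2) < 0, p′(x1 + x2) + x1·p″(x1 + x2) ≤ 0, and p(x1 + x2) + 2·x1·p′(x1 + x2) ≥ 0, then both inequalities hold at this point: (In2): P_{x1x1}·P_{z1z1} − (P_{x1z1})² > |P_{x1x2}·P_{z1z1} − P_{x1z1}·P_{x2z1}|, and (In3): −P_{x1x1} ≥ |P_{x1x2}|, where subscripts on P denote iterated partial derivatives. -/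

import Mathlib

/-- The profit function
`P(x1, x2, z1) = (1 - qσ) x1 p(x1+x2) - C(x1) - (1-q)σ z1 - q F(x1 p(x1+x2) - z1)`. -/
noncomputable def P (σ q : ℝ) (p C F : ℝ → ℝ) (x1 x2 z1 : ℝ) : ℝ :=
  (1 - q * σ) * x1 * p (x1 + x2) - C x1 - (1 - q) * σ * z1
    - q * F (x1 * p (x1 + x2) - z1)

/-- `∂²P/∂x1²` at `(x1, x2, z1)`. -/
noncomputable def Px1x1 (σ q : ℝ) (p C F : ℝ → ℝ) (x1 x2 z1 : ℝ) : ℝ :=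
  deriv (deriv (fun v => P σ q p C F v x2 z1)) x1

/-- `∂²P/∂z1²` at `(x1, x2, z1)`. -/
noncomputable def Pz1z1 (σ q : ℝ) (p C F : ℝ → ℝ) (x1 x2 z1 : ℝ) : ℝ :=
  deriv (deriv (fun w => P σ q p C F x1 x2 w)) z1

/-- `∂²P/∂x1∂z1` at `(x1, x2, z1)` (first differentiate in `x1`, then in `z1`). -/
noncomputable def Px1z1 (σ q : ℝ) (p C F : ℝ → ℝ) (x1 x2 z1 : ℝ) : ℝ :=
  deriv (fun w => deriv (fun v => P σ q p C F v x2 w) x1) z1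

/-- `∂²P/∂x1∂x2` at `(x1, x2, z1)` (first differentiate in `x1`, then in `x2`). -/
noncomputable def Px1x2 (σ q : ℝ) (p C F : ℝ → ℝ) (x1 x2 z1 : ℝ) : ℝ :=
  deriv (fun u => deriv (fun v => P σ q p C F v u z1) x1) x2

/-- `∂²P/∂x2∂z1` at `(x1, x2, z1)` (first differentiate in `x2`, then in `z1`). -/
noncomputable def Px2z1 (σ q : ℝ) (p C F : ℝ → ℝ) (x1 x2 z1 : ℝ) : ℝ :=
  deriv (fun w => deriv (fun u => P σ q p C F x1 u w) x2) z1

/-!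
With `y = x1 p - z1`, `K = q F''(y) > 0` and the marginal revenue `g = p + x1 p'`, all five
second partials are explicit: `P_z1z1 = -K`, `P_x1z1 = K g`, `P_x2z1 = K x1 p'`, and `P_x1x1`,
`P_x1x2` carry the coefficient `1 - qσ - qF'(y)`, which the second first-order condition turns
into `1 - σ`. In both 2×2 minors of (In2) the `K²`-terms cancel, leaving
`K (C'' - (1-σ)(2p' + x1 p''))` against `K (1-σ) |p' + x1 p''|`, so (In2) reduces to
`C'' - (1-σ) p' > 0`. For (In3) the `K`-terms are `K g a` and `K g (a + 2 x1 p')` with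
`a = p > 0`, and `g ≥ 0` because `g` is the mean of `p` and `p + 2 x1 p'`.
-/

noncomputable def revenue (p : ℝ → ℝ) (x1 x2 : ℝ) : ℝ :=
  x1 * p (x1 + x2)

noncomputable def marginalRevenue (p : ℝ → ℝ) (x1 x2 : ℝ) : ℝ :=
  p (x1 + x2) + x1 * deriv p (x1 + x2)

/-- The coefficient of the marginal revenue in `∂P/∂x1` at `y = x1 p(x1 + x2) - z1`;
the second first-order condition says exactly that it equals `1 - σ`. -/
noncomputable def retainedShare (σ q : ℝ) (F : ℝ → ℝ) (y : ℝ) : ℝ :=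
  1 - q * σ - q * deriv F y

section Derivatives

variable {σ q : ℝ} {p C F : ℝ → ℝ}

theorem hasDerivAt_revenue_fst {x1 x2 : ℝ} (hp : DifferentiableAt ℝ p (x1 + x2)) :
    HasDerivAt (fun v => revenue p v x2) (marginalRevenue p x1 x2) x1 := by
  have h := (hasDerivAt_id' x1).fun_mul (hp.hasDerivAt.comp_add_const x1 x2)
  rwa [one_mul] at h

theorem hasDerivAt_revenue_snd {x1 x2 : ℝ} (hp : DifferentiableAt ℝ p (x1 + x2)) :
    HasDerivAt (fun u => revenue p x1 u) (x1 * deriv p (x1 + x2)) x2 :=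
  (hp.hasDerivAt.comp_const_add x1 x2).const_mul x1

theorem hasDerivAt_marginalRevenue_fst {x1 x2 : ℝ} (hp : DifferentiableAt ℝ p (x1 + x2))
    (hp' : DifferentiableAt ℝ (deriv p) (x1 + x2)) :
    HasDerivAt (fun v => marginalRevenue p v x2)
      (2 * deriv p (x1 + x2) + x1 * deriv (deriv p) (x1 + x2)) x1 := by
  have h := (hp.hasDerivAt.comp_add_const x1 x2).fun_add (hasDerivAt_revenue_fst hp')
  exact h.congr_deriv (by simp only [marginalRevenue]; ring)

theorem hasDerivAt_marginalRevenue_snd {x1 x2 : ℝ} (hp : DifferentiableAt ℝ p (x1 + x2))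
    (hp' : DifferentiableAt ℝ (deriv p) (x1 + x2)) :
    HasDerivAt (fun u => marginalRevenue p x1 u)
      (deriv p (x1 + x2) + x1 * deriv (deriv p) (x1 + x2)) x2 :=
  (hp.hasDerivAt.comp_const_add x1 x2).fun_add (hasDerivAt_revenue_snd hp')

theorem hasDerivAt_retainedShare_comp (σ q : ℝ) {R : ℝ → ℝ} {R' t : ℝ}
    (hR : HasDerivAt R R' t) (hF : DifferentiableAt ℝ (deriv F) (R t)) :
    HasDerivAt (fun t => retainedShare σ q F (R t)) (-(q * deriv (deriv F) (R t)) * R') t :=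
  ((hF.hasDerivAt.const_mul q).const_sub (1 - q * σ)).comp t hR

theorem P_eq_revenue (x1 x2 z1 : ℝ) :
    P σ q p C F x1 x2 z1 = (1 - q * σ) * revenue p x1 x2 - C x1 - (1 - q) * σ * z1
      - q * F (revenue p x1 x2 - z1) := by
  simp only [P, revenue]
  ring

theorem HasDerivAt.profit {R c : ℝ → ℝ} {R' c' t z k : ℝ}
    (hF : DifferentiableAt ℝ F (R t - z)) (hR : HasDerivAt R R' t) (hc : HasDerivAt c c' t) :
    HasDerivAt (fun t => (1 - q * σ) * R t - c t - k - q * F (R t - z))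
      (retainedShare σ q F (R t - z) * R' - c') t := by
  have h := (((hR.const_mul (1 - q * σ)).fun_sub hc).sub_const k).fun_sub
    ((hF.hasDerivAt.comp t (hR.sub_const z)).const_mul q)
  exact h.congr_deriv (by simp only [retainedShare]; ring)

theorem hasDerivAt_P_x1 (hp : Differentiable ℝ p) (hC : Differentiable ℝ C)
    (hF : Differentiable ℝ F) (x1 x2 z1 : ℝ) :
    HasDerivAt (fun v => P σ q p C F v x2 z1)
      (retainedShare σ q F (revenue p x1 x2 - z1) * marginalRevenue p x1 x2 - deriv C x1) x1 := by
  simp only [P_eq_revenue]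
  exact (hasDerivAt_revenue_fst (hp _)).profit (hF _) (hC x1).hasDerivAt

theorem hasDerivAt_P_x2 (hp : Differentiable ℝ p) (hF : Differentiable ℝ F) (x1 x2 z1 : ℝ) :
    HasDerivAt (fun u => P σ q p C F x1 u z1)
      (retainedShare σ q F (revenue p x1 x2 - z1) * (x1 * deriv p (x1 + x2))) x2 := by
  simp only [P_eq_revenue]
  simpa using (hasDerivAt_revenue_snd (hp _)).profit (hF _) (hasDerivAt_const x2 (C x1))

theorem hasDerivAt_P_z1 (hF : Differentiable ℝ F) (x1 x2 z1 : ℝ) :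
    HasDerivAt (fun w => P σ q p C F x1 x2 w)
      (1 - σ - retainedShare σ q F (revenue p x1 x2 - z1)) z1 := by
  simp only [P_eq_revenue]
  have hy := (hasDerivAt_id' z1).const_sub (revenue p x1 x2)
  have h := (((hasDerivAt_id' z1).const_mul ((1 - q) * σ)).const_sub
    ((1 - q * σ) * revenue p x1 x2 - C x1)).fun_sub (((hF _).hasDerivAt.comp z1 hy).const_mul q)
  exact h.congr_deriv (by simp only [retainedShare]; ring)

theorem Pz1z1_eq (hF : ContDiff ℝ 2 F) (x1 x2 z1 : ℝ) :
    Pz1z1 σ q p C F x1 x2 z1 = -(q * deriv (deriv F) (revenue p x1 x2 - z1)) := by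
  have hder : deriv (fun w => P σ q p C F x1 x2 w)
      = fun w => 1 - σ - retainedShare σ q F (revenue p x1 x2 - w) :=
    funext fun w => (hasDerivAt_P_z1 (hF.differentiable two_ne_zero) x1 x2 w).deriv
  have hshare := hasDerivAt_retainedShare_comp σ q
    ((hasDerivAt_id' z1).const_sub (revenue p x1 x2)) (hF.differentiable_deriv_two _)
  rw [Pz1z1, hder, (hshare.const_sub (1 - σ)).deriv]
  ring

theorem Px1z1_eq (hp : Differentiable ℝ p) (hC : Differentiable ℝ C) (hF : ContDiff ℝ 2 F)
    (x1 x2 z1 : ℝ) :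
    Px1z1 σ q p C F x1 x2 z1
      = q * deriv (deriv F) (revenue p x1 x2 - z1) * marginalRevenue p x1 x2 := by
  have hder : (fun w => deriv (fun v => P σ q p C F v x2 w) x1)
      = fun w => retainedShare σ q F (revenue p x1 x2 - w) * marginalRevenue p x1 x2
          - deriv C x1 :=
    funext fun w => (hasDerivAt_P_x1 hp hC (hF.differentiable two_ne_zero) x1 x2 w).deriv
  have hshare := hasDerivAt_retainedShare_comp σ q
    ((hasDerivAt_id' z1).const_sub (revenue p x1 x2)) (hF.differentiable_deriv_two _)
  rw [Px1z1, hder, ((hshare.mul_const (marginalRevenue p x1 x2)).sub_const (deriv C x1)).deriv]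
  ring

theorem Px2z1_eq (hp : Differentiable ℝ p) (hF : ContDiff ℝ 2 F) (x1 x2 z1 : ℝ) :
    Px2z1 σ q p C F x1 x2 z1
      = q * deriv (deriv F) (revenue p x1 x2 - z1) * (x1 * deriv p (x1 + x2)) := by
  have hder : (fun w => deriv (fun u => P σ q p C F x1 u w) x2)
      = fun w => retainedShare σ q F (revenue p x1 x2 - w) * (x1 * deriv p (x1 + x2)) :=
    funext fun w => (hasDerivAt_P_x2 hp (hF.differentiable two_ne_zero) x1 x2 w).deriv
  have hshare := hasDerivAt_retainedShare_comp σ q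
    ((hasDerivAt_id' z1).const_sub (revenue p x1 x2)) (hF.differentiable_deriv_two _)
  rw [Px2z1, hder, (hshare.mul_const (x1 * deriv p (x1 + x2))).deriv]
  ring

theorem Px1x1_eq (hp : ContDiff ℝ 2 p) (hC : ContDiff ℝ 2 C) (hF : ContDiff ℝ 2 F)
    (x1 x2 z1 : ℝ) :
    Px1x1 σ q p C F x1 x2 z1
      = retainedShare σ q F (revenue p x1 x2 - z1)
          * (2 * deriv p (x1 + x2) + x1 * deriv (deriv p) (x1 + x2))
        - deriv (deriv C) x1
        - q * deriv (deriv F) (revenue p x1 x2 - z1) * marginalRevenue p x1 x2 ^ 2 := by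
  have hp1 := hp.differentiable two_ne_zero
  have hder : deriv (fun v => P σ q p C F v x2 z1)
      = fun v => retainedShare σ q F (revenue p v x2 - z1) * marginalRevenue p v x2
          - deriv C v :=
    funext fun v => (hasDerivAt_P_x1 hp1 (hC.differentiable two_ne_zero)
      (hF.differentiable two_ne_zero) v x2 z1).deriv
  have hshare := hasDerivAt_retainedShare_comp σ q
    ((hasDerivAt_revenue_fst (x2 := x2) (hp1 (x1 + x2))).sub_const z1)
    (hF.differentiable_deriv_two _)
  have hmr := hasDerivAt_marginalRevenue_fst (hp1 (x1 + x2)) (hp.differentiable_deriv_two (x1 + x2))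
  rw [Px1x1, hder, ((hshare.fun_mul hmr).fun_sub (hC.differentiable_deriv_two x1).hasDerivAt).deriv]
  ring

theorem Px1x2_eq (hp : ContDiff ℝ 2 p) (hC : Differentiable ℝ C) (hF : ContDiff ℝ 2 F)
    (x1 x2 z1 : ℝ) :
    Px1x2 σ q p C F x1 x2 z1
      = retainedShare σ q F (revenue p x1 x2 - z1)
          * (deriv p (x1 + x2) + x1 * deriv (deriv p) (x1 + x2))
        - q * deriv (deriv F) (revenue p x1 x2 - z1) * (x1 * deriv p (x1 + x2))
          * marginalRevenue p x1 x2 := by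
  have hp1 := hp.differentiable two_ne_zero
  have hder : (fun u => deriv (fun v => P σ q p C F v u z1) x1)
      = fun u => retainedShare σ q F (revenue p x1 u - z1) * marginalRevenue p x1 u
          - deriv C x1 :=
    funext fun u => (hasDerivAt_P_x1 hp1 hC (hF.differentiable two_ne_zero) x1 u z1).deriv
  have hshare := hasDerivAt_retainedShare_comp σ q
    ((hasDerivAt_revenue_snd (x1 := x1) (hp1 (x1 + x2))).sub_const z1)
    (hF.differentiable_deriv_two _)
  have hmr := hasDerivAt_marginalRevenue_snd (hp1 (x1 + x2)) (hp.differentiable_deriv_two (x1 + x2))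
  rw [Px1x2, hder, ((hshare.fun_mul hmr).sub_const (deriv C x1)).deriv]
  ring

end Derivatives

theorem in2_of_hessian_entries {s K b d c x g : ℝ} (hs : 0 < s) (hK : 0 < K) (hb : b < 0)
    (hc : 0 ≤ c) (hmix : b + x * d ≤ 0) :
    (s * (2 * b + x * d) - c - K * g ^ 2) * -K - (K * g) ^ 2
      > |(s * (b + x * d) - K * (x * b) * g) * -K - K * g * (K * (x * b))| := by
  have hcross : (s * (b + x * d) - K * (x * b) * g) * -K - K * g * (K * (x * b))
      = K * s * -(b + x * d) := by ring
  have hKs := mul_pos hK hs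
  rw [hcross, abs_of_nonneg (mul_nonneg hKs.le (neg_nonneg.2 hmix))]
  nlinarith [mul_pos hK (by nlinarith : 0 < c - s * b)]

theorem in3_of_hessian_entries {s K a b d c x : ℝ} (hs : 0 ≤ s) (hK : 0 ≤ K) (ha : 0 ≤ a)
    (hb : b ≤ 0) (hc : 0 ≤ c) (hmix : b + x * d ≤ 0) (hsum : 0 ≤ a + 2 * x * b) :
    -(s * (2 * b + x * d) - c - K * (a + x * b) ^ 2)
      ≥ |s * (b + x * d) - K * (x * b) * (a + x * b)| := by
  have hg : 0 ≤ a + x * b := by linarith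
  rw [ge_iff_le, abs_le]
  constructor
  · nlinarith [mul_nonneg (mul_nonneg hK hg) ha, mul_nonneg hs (neg_nonneg.2 hb)]
  · nlinarith [mul_nonneg (mul_nonneg hK hg) hsum, mul_nonneg hs (neg_nonneg.2 hb),
      mul_nonneg hs (neg_nonneg.2 hmix)]

theorem stmt_5_general (σ q : ℝ) (hσ1 : σ < 1) (hq0 : 0 < q)
    (p C F : ℝ → ℝ) (hp : ContDiff ℝ 2 p) (hC : ContDiff ℝ 2 C) (hF : ContDiff ℝ 2 F)
    (x1 x2 z1 : ℝ)
    (hfoc2 : q * deriv F (x1 * p (x1 + x2) - z1) = (1 - q) * σ)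
    (hppos : 0 < p (x1 + x2))
    (hF2 : 0 < deriv (deriv F) (x1 * p (x1 + x2) - z1))
    (hC2 : 0 ≤ deriv (deriv C) x1)
    (hp' : deriv p (x1 + x2) < 0)
    (hmix : deriv p (x1 + x2) + x1 * deriv (deriv p) (x1 + x2) ≤ 0)
    (hsum : 0 ≤ p (x1 + x2) + 2 * x1 * deriv p (x1 + x2)) :
    (Px1x1 σ q p C F x1 x2 z1 * Pz1z1 σ q p C F x1 x2 z1
        - (Px1z1 σ q p C F x1 x2 z1) ^ 2
      > |Px1x2 σ q p C F x1 x2 z1 * Pz1z1 σ q p C F x1 x2 z1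
          - Px1z1 σ q p C F x1 x2 z1 * Px2z1 σ q p C F x1 x2 z1|)
    ∧ -Px1x1 σ q p C F x1 x2 z1 ≥ |Px1x2 σ q p C F x1 x2 z1| := by
  have hC1 := hC.differentiable two_ne_zero
  have hshare : retainedShare σ q F (revenue p x1 x2 - z1) = 1 - σ := by
    simp only [retainedShare, revenue]
    linarith
  have hK : 0 < q * deriv (deriv F) (revenue p x1 x2 - z1) := mul_pos hq0 hF2
  rw [Px1x1_eq hp hC hF, Pz1z1_eq hF, Px1z1_eq (hp.differentiable two_ne_zero) hC1 hF,
    Px1x2_eq hp hC1 hF, Px2z1_eq (hp.differentiable two_ne_zero) hF, hshare]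
  exact ⟨in2_of_hessian_entries (by linarith) hK hp' hC2 hmix,
    in3_of_hessian_entries (by linarith) hK.le hppos.le hp'.le hC2 hmix hsum⟩

/-- at a point satisfying both first-order conditions with
`C' > 0` and `p > 0`, if `F'' > 0`, `C'' ≥ 0`, `p' < 0`, `p' + x1 p'' ≤ 0` and
`p + 2 x1 p' ≥ 0` there, then both (In2) and (In3) hold. -/
theorem stmt_5 (σ q : ℝ) (hσ0 : 0 < σ) (hσ1 : σ < 1) (hq0 : 0 < q) (hq1 : q < 1)
    (p C F : ℝ → ℝ) (hp : ContDiff ℝ 2 p) (hC : ContDiff ℝ 2 C) (hF : ContDiff ℝ 2 F)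
    (x1 x2 z1 : ℝ)
    (hfoc1 : (1 - σ) * (p (x1 + x2) + x1 * deriv p (x1 + x2)) = deriv C x1)
    (hfoc2 : q * deriv F (x1 * p (x1 + x2) - z1) = (1 - q) * σ)
    (hC' : 0 < deriv C x1)
    (hppos : 0 < p (x1 + x2))
    (hF2 : 0 < deriv (deriv F) (x1 * p (x1 + x2) - z1))
    (hC2 : 0 ≤ deriv (deriv C) x1)
    (hp' : deriv p (x1 + x2) < 0)
    (hmix : deriv p (x1 + x2) + x1 * deriv (deriv p) (x1 + x2) ≤ 0)
    (hsum : 0 ≤ p (x1 + x2) + 2 * x1 * deriv p (x1 + x2)) :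
    (Px1x1 σ q p C F x1 x2 z1 * Pz1z1 σ q p C F x1 x2 z1
        - (Px1z1 σ q p C F x1 x2 z1) ^ 2
      > |Px1x2 σ q p C F x1 x2 z1 * Pz1z1 σ q p C F x1 x2 z1
          - Px1z1 σ q p C F x1 x2 z1 * Px2z1 σ q p C F x1 x2 z1|)
    ∧ -Px1x1 σ q p C F x1 x2 z1 ≥ |Px1x2 σ q p C F x1 x2 z1| :=
  stmt_5_general σ q hσ1 hq0 p C F hp hC hF x1 x2 z1 hfoc2 hppos hF2 hC2 hp' hmix hsum
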